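/- arXiv:1910.07105 — 3 statements merged into one kernel-verified Lean document; each statement's English description precedes it below -/
import Mathlib

section
/- Let 0 < |j| < 1 and ν < 0. The equation 1 − i μ_ν = 0, with μ_ν = k^{2|j|} Γ(1−|j|) sin(|j|π) / (4^{|j|} Γ(1+|j|) ν + k^{2|j|} Γ(1−|j|) cos(|j|π)) evaluated at k = i κ_b (κ_b > 0, using (iκ_b)^{2|j|} = κ_b^{2|j|} e^{i|j|π}), holds if and only if κ_b^{2|j|} = −4^{|j|} ν Γ(1+|j|)/Γ(1−|j|); equivalently the bound state energy E_b = −κ_b²/(2M) equals −(2/M)[−ν Γ(1+|j|)/Γ(1−|j|)]^{1/|j|}. -/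
/-!
At `k = iκ` the phase `e^{i|j|π}` of `k^{2|j|}` cancels against
`cos(|j|π) - i sin(|j|π) = e^{-i|j|π}`, so the pole condition `D = i N` on the numerator `N`
and denominator `D` of `μ_ν` collapses to the real equation
`κ^{2|j|} Γ(1-|j|) + 4^{|j|} Γ(1+|j|) ν = 0`. For `ν < 0` its right-hand side `4^{|j|} P`,
with `P = -ν Γ(1+|j|)/Γ(1-|j|)`, is positive, so taking `|j|`-th roots gives `κ² = 4 P^{1/|j|}`,
i.e. the stated energy.
-/

open Complex Real

lemma Complex.one_sub_I_mul_div_eq_zero_iff {N D : ℂ} (hD : D ≠ 0) :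
    1 - I * N / D = 0 ↔ D - I * N = 0 := by
  rw [sub_eq_zero, sub_eq_zero, eq_comm, div_eq_one_iff_eq hD, eq_comm]

lemma Complex.exp_mul_I_mul_cos_sub_I_mul_sin (θ : ℂ) :
    exp (θ * I) * (cos θ - I * sin θ) = 1 := by
  rw [exp_mul_I]
  linear_combination cos_sq_add_sin_sq θ - sin θ ^ 2 * I_sq

lemma Complex.ofReal_add_mul_exp_cos_sub_I_mul_mul_exp_sin (A x c θ : ℝ) :
    (A : ℂ) + (x : ℂ) * exp (θ * I) * (c : ℂ) * (Real.cos θ : ℂ)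
        - I * ((x : ℂ) * exp (θ * I) * (c : ℂ) * (Real.sin θ : ℂ))
      = ((A + x * c : ℝ) : ℂ) := by
  push_cast
  linear_combination (x : ℂ) * c * exp_mul_I_mul_cos_sub_I_mul_sin θ

lemma Real.rpow_two_mul_eq_four_rpow_mul_iff {κ a P : ℝ} (hκ : 0 < κ) (ha : a ≠ 0)
    (hP : 0 ≤ P) :
    κ ^ (2 * a) = 4 ^ a * P ↔ κ ^ 2 = 4 * P ^ (1 / a) := by
  have h4 : (0 : ℝ) < 4 ^ a := rpow_pos_of_pos (by norm_num) a
  have hκa : κ ^ (2 * a) = (κ ^ 2 / 4) ^ a * 4 ^ a := by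
    rw [div_rpow (by positivity) (by norm_num), div_mul_cancel₀ _ h4.ne', ← rpow_natCast,
      ← rpow_mul hκ.le, Nat.cast_ofNat]
  rw [hκa, mul_comm, mul_left_cancel_iff_of_pos h4, one_div,
    ← eq_rpow_inv (by positivity) hP ha, div_eq_iff four_ne_zero, mul_comm]

theorem stmt_9 (j ν κ M : ℝ) (hj0 : 0 < |j|) (hj : |j| < 1) (hν : ν < 0)
    (hκ : 0 < κ) (hM : 0 < M)
    (hden : ((4 ^ |j| * Real.Gamma (1 + |j|) * ν : ℝ) : ℂ)
        + ((κ ^ (2 * |j|) : ℝ) : ℂ) * Complex.exp (|j| * π * I)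
          * ((Real.Gamma (1 - |j|) : ℝ) : ℂ) * ((Real.cos (|j| * π) : ℝ) : ℂ) ≠ 0) :
    ((1 - I * (((κ ^ (2 * |j|) : ℝ) : ℂ) * Complex.exp (|j| * π * I)
          * ((Real.Gamma (1 - |j|) : ℝ) : ℂ) * ((Real.sin (|j| * π) : ℝ) : ℂ)
        / (((4 ^ |j| * Real.Gamma (1 + |j|) * ν : ℝ) : ℂ)
          + ((κ ^ (2 * |j|) : ℝ) : ℂ) * Complex.exp (|j| * π * I)
            * ((Real.Gamma (1 - |j|) : ℝ) : ℂ) * ((Real.cos (|j| * π) : ℝ) : ℂ))) = 0)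
      ↔ κ ^ (2 * |j|) = -(4 ^ |j|) * ν * Real.Gamma (1 + |j|) / Real.Gamma (1 - |j|)) ∧
    ((κ ^ (2 * |j|) = -(4 ^ |j|) * ν * Real.Gamma (1 + |j|) / Real.Gamma (1 - |j|))
      ↔ -κ ^ 2 / (2 * M)
          = -(2 / M) * (-ν * Real.Gamma (1 + |j|) / Real.Gamma (1 - |j|)) ^ (1 / |j|)) := by
  have hGminus : 0 < Real.Gamma (1 - |j|) := Real.Gamma_pos_of_pos (by linarith)
  have hGplus : 0 < Real.Gamma (1 + |j|) := Real.Gamma_pos_of_pos (by linarith)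
  have hP : 0 ≤ -ν * Real.Gamma (1 + |j|) / Real.Gamma (1 - |j|) := by
    have := neg_pos.2 hν
    positivity
  have hroot : -(4 ^ |j|) * ν * Real.Gamma (1 + |j|) / Real.Gamma (1 - |j|)
      = 4 ^ |j| * (-ν * Real.Gamma (1 + |j|) / Real.Gamma (1 - |j|)) := by ring
  constructor
  · have hphase := ofReal_add_mul_exp_cos_sub_I_mul_mul_exp_sin
      (4 ^ |j| * Real.Gamma (1 + |j|) * ν) (κ ^ (2 * |j|)) (Real.Gamma (1 - |j|)) (|j| * π)
    rw [ofReal_mul |j| π] at hphase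
    rw [mul_div_assoc', one_sub_I_mul_div_eq_zero_iff hden, hphase, ofReal_eq_zero,
      eq_div_iff hGminus.ne']
    constructor <;> intro h <;> linarith
  · rw [hroot, rpow_two_mul_eq_four_rpow_mul_iff hκ hj0.ne' hP]
    generalize (-ν * Real.Gamma (1 + |j|) / Real.Gamma (1 - |j|)) ^ (1 / |j|) = Q
    constructor <;> intro h
    · rw [h]; field_simp; ring
    · field_simp at h; linarith
end

section
/- For |j| < 1 and κ > 0, the modified Bessel function r ↦ K_{|j|}(κ r) is square integrable on (0, ∞) with respect to the measure r dr. -/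
/-!
Bounding `cosh t ≥ eᵗ/2`, `cosh (νt) ≤ e^{|ν|t}` and `e^{-y} ≤ (β/y)^β` in the integral
representation gives `K_ν(x) ≤ (2β/x)^β / (β - |ν|)` for every `β > |ν|`, while `cosh t ≥ 1` gives
the decay `K_ν(x) ≤ e^{-x/2} K_ν(x/2)`. Hence `K_ν(x) ≲ x^{-β} e^{-x/2}`, and for `|ν| < β < 1`
the function `K_ν(κr)² r ≲ r^{1-2β} e^{-κr}` is dominated by an integrable Gamma-type integrand.
-/

/-- Modified Bessel function of the second kind of (real) order `ν`, for positive
argument, defined by the integral representation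
`K_ν(x) = ∫₀^∞ exp(−x cosh t) cosh(ν t) dt`. -/
noncomputable def besselK (ν x : ℝ) : ℝ :=
  ∫ t in Set.Ioi (0 : ℝ), Real.exp (-x * Real.cosh t) * Real.cosh (ν * t)

open Real MeasureTheory Set

lemma cosh_le_exp_abs (x : ℝ) : cosh x ≤ exp |x| := by
  rw [← cosh_abs, cosh_eq]
  linarith [exp_le_exp.2 (show -|x| ≤ |x| by linarith [abs_nonneg x])]

lemma exp_le_two_mul_cosh (x : ℝ) : exp x ≤ 2 * cosh x := by
  rw [cosh_eq]
  linarith [exp_pos (-x)]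

lemma exp_neg_le_div_rpow {β y : ℝ} (hβ : 0 < β) (hy : 0 < y) : exp (-y) ≤ (β / y) ^ β := by
  have h : exp (-(y / β)) ≤ β / y := by
    rw [exp_neg, inv_le_comm₀ (exp_pos _) (by positivity), inv_div]
    linarith [add_one_le_exp (y / β)]
  calc exp (-y) = exp (-(y / β)) ^ β := by rw [← exp_mul]; field_simp
    _ ≤ (β / y) ^ β := rpow_le_rpow (exp_pos _).le h hβ.le

lemma besselK_integrand_le (ν : ℝ) {x β t : ℝ} (hx : 0 < x) (hβ : 0 < β) (ht : 0 ≤ t) :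
    exp (-x * cosh t) * cosh (ν * t) ≤ (2 * β / x) ^ β * exp (-(β - |ν|) * t) := by
  have hcosh : cosh (ν * t) ≤ exp (|ν| * t) := by
    simpa [abs_mul, abs_of_nonneg ht] using cosh_le_exp_abs (ν * t)
  have hexp : exp (-x * cosh t) ≤ exp (-(x * exp t / 2)) :=
    exp_le_exp.2 (by nlinarith [exp_le_two_mul_cosh t])
  have hpow : exp (-(x * exp t / 2)) ≤ (2 * β / x) ^ β * exp (-β * t) := by
    refine (exp_neg_le_div_rpow hβ (by positivity)).trans_eq ?_
    rw [show -β * t = -t * β by ring, exp_mul, ← mul_rpow (by positivity) (exp_pos _).le,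
      exp_neg]
    congr 1
    field_simp
  calc exp (-x * cosh t) * cosh (ν * t)
      ≤ (2 * β / x) ^ β * exp (-β * t) * exp (|ν| * t) :=
        mul_le_mul (hexp.trans hpow) hcosh (cosh_pos _).le (by positivity)
    _ = (2 * β / x) ^ β * exp (-(β - |ν|) * t) := by rw [mul_assoc, ← exp_add]; ring_nf

lemma integrableOn_besselK_integrand (ν : ℝ) {x : ℝ} (hx : 0 < x) :
    IntegrableOn (fun t => exp (-x * cosh t) * cosh (ν * t)) (Ioi 0) := by
  have hβ : 0 < |ν| + 1 := by positivity
  refine Integrable.mono' ((exp_neg_integrableOn_Ioi 0 (b := |ν| + 1 - |ν|) (by simp)).const_mul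
    ((2 * (|ν| + 1) / x) ^ (|ν| + 1))) (by fun_prop) ?_
  filter_upwards [ae_restrict_mem measurableSet_Ioi] with t ht
  rw [norm_of_nonneg (by positivity)]
  exact besselK_integrand_le ν hx hβ (le_of_lt ht)

lemma besselK_nonneg (ν x : ℝ) : 0 ≤ besselK ν x :=
  setIntegral_nonneg measurableSet_Ioi fun _ _ => by positivity

lemma measurable_besselK (ν : ℝ) : Measurable (besselK ν) :=
  (StronglyMeasurable.integral_prod_right
    (f := fun x t => exp (-x * cosh t) * cosh (ν * t))
    (by fun_prop : Continuous _).stronglyMeasurable).measurable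

lemma besselK_le_rpow {ν x β : ℝ} (hx : 0 < x) (hνβ : |ν| < β) :
    besselK ν x ≤ (2 * β / x) ^ β / (β - |ν|) := by
  have hβ : 0 < β := (abs_nonneg ν).trans_lt hνβ
  have hrate : 0 < β - |ν| := sub_pos.2 hνβ
  calc besselK ν x ≤ ∫ t in Ioi 0, (2 * β / x) ^ β * exp (-(β - |ν|) * t) :=
        setIntegral_mono_on (integrableOn_besselK_integrand ν hx)
          ((exp_neg_integrableOn_Ioi 0 hrate).const_mul _) measurableSet_Ioi
          fun t ht => besselK_integrand_le ν hx hβ (le_of_lt ht)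
    _ = (2 * β / x) ^ β / (β - |ν|) := by
        rw [integral_const_mul, integral_exp_mul_Ioi (by linarith) 0]
        field_simp
        simp

lemma besselK_le_exp_sub_mul (ν : ℝ) {c x : ℝ} (hc : 0 < c) (hcx : c ≤ x) :
    besselK ν x ≤ exp (c - x) * besselK ν c := by
  calc besselK ν x
      ≤ ∫ t in Ioi 0, exp (c - x) * (exp (-c * cosh t) * cosh (ν * t)) :=
        setIntegral_mono_on (integrableOn_besselK_integrand ν (hc.trans_le hcx))
          ((integrableOn_besselK_integrand ν hc).const_mul _) measurableSet_Ioi fun t _ => by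
          rw [← mul_assoc, ← exp_add]
          gcongr
          nlinarith [one_le_cosh t]
    _ = exp (c - x) * besselK ν c := integral_const_mul _ _

lemma besselK_le_rpow_mul_exp {ν x β : ℝ} (hx : 0 < x) (hνβ : |ν| < β) :
    besselK ν x ≤ (4 * β / x) ^ β / (β - |ν|) * exp (-(x / 2)) := by
  calc besselK ν x ≤ exp (x / 2 - x) * besselK ν (x / 2) :=
        besselK_le_exp_sub_mul ν (by positivity) (by linarith)
    _ ≤ exp (-(x / 2)) * ((2 * β / (x / 2)) ^ β / (β - |ν|)) := by
        rw [show x / 2 - x = -(x / 2) by ring]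
        gcongr
        exact besselK_le_rpow (by positivity) hνβ
    _ = (4 * β / x) ^ β / (β - |ν|) * exp (-(x / 2)) := by
        rw [mul_comm]; congr 3; field_simp; ring

lemma integrableOn_besselK_comp_mul_sq_mul {ν κ : ℝ} (hν : |ν| < 1) (hκ : 0 < κ) :
    IntegrableOn (fun r => besselK ν (κ * r) ^ 2 * r) (Ioi 0) := by
  -- any `β ∈ (|ν|, 1)` works: `r ^ (1 - 2β)` must be integrable at `0`
  set β := (|ν| + 1) / 2 with hβ
  have hνβ : |ν| < β := by linarith
  refine Integrable.mono'
    ((integrableOn_rpow_mul_exp_neg_mul_rpow (s := -|ν|) (by linarith) one_pos hκ).const_mul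
      (((4 * β / κ) ^ β / (β - |ν|)) ^ 2))
    ((((measurable_besselK ν).comp (measurable_const_mul κ)).pow_const 2).mul
      measurable_id).aestronglyMeasurable ?_
  filter_upwards [ae_restrict_mem measurableSet_Ioi] with r (hr : 0 < r)
  rw [norm_of_nonneg (by positivity)]
  have hr_pow : (r ^ β) ^ 2 = r ^ |ν| * r := by
    rw [← rpow_natCast, ← rpow_mul hr.le, ← rpow_add_one hr.ne', hβ]
    congr 1; push_cast; ring
  have hexp : exp (-(κ * r / 2)) ^ 2 = exp (-κ * r) := by rw [← exp_nat_mul]; ring_nf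
  calc besselK ν (κ * r) ^ 2 * r
      ≤ ((4 * β / (κ * r)) ^ β / (β - |ν|) * exp (-(κ * r / 2))) ^ 2 * r := by
        gcongr
        · exact besselK_nonneg _ _
        · exact besselK_le_rpow_mul_exp (by positivity) hνβ
    _ = ((4 * β / κ) ^ β / (β - |ν|)) ^ 2 * (r ^ (-|ν|) * exp (-κ * r ^ (1 : ℝ))) := by
        rw [← div_div, div_rpow (by positivity) hr.le, rpow_neg hr.le, rpow_one, mul_pow,
          div_pow, div_pow, div_pow, hr_pow, hexp]
        field_simp

theorem stmt_12 (j κ : ℝ) (hj : |j| < 1) (hκ : 0 < κ) :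
    MeasureTheory.IntegrableOn (fun r : ℝ => (besselK |j| (κ * r)) ^ 2 * r)
      (Set.Ioi 0) :=
  integrableOn_besselK_comp_mul_sq_mul (by rwa [abs_abs]) hκ
end

section
/- Let 0 < |j| < 1, r₀ > 0, λ real with |λ| > |j| sign condition such that (λ+|j|)/(λ−|j|) > 0, and M > 0. The BG bound-state energy E_BG(ν) = −(2/M)[−ν Γ(1+|j|)/Γ(1−|j|)]^{1/|j|} equals the KS bound-state energy E_KS = −(2/(M r₀²))[((λ+|j|)/(λ−|j|)) Γ(1+|j|)/Γ(1−|j|)]^{1/|j|} if and only if ν = −(1/r₀^{2|j|})·(λ+|j|)/(λ−|j|). -/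
/-!
Both energies have the form `E(s) = -(2/M) (s Γ(1+a)/Γ(1-a))^(1/a)` with `a = |j|`: the BG energy
at `s = -ν` and, after writing `r₀^2 = (r₀^(2a))^(1/a)` inside the power, the KS energy at
`s = ((λ+a)/(λ-a)) / r₀^(2a)`. As `s ↦ E(s)` is injective on `s ≥ 0`, the energies agree exactly
when these two values of `s` do.
-/

open Real

noncomputable def boundStateEnergy (M a s : ℝ) : ℝ :=
  -(2 / M) * (s * Gamma (1 + a) / Gamma (1 - a)) ^ (1 / a)

lemma gamma_one_add_div_gamma_one_sub_pos {a : ℝ} (ha : |a| < 1) :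
    0 < Gamma (1 + a) / Gamma (1 - a) := by
  obtain ⟨h₁, h₂⟩ := abs_lt.mp ha
  exact div_pos (Gamma_pos_of_pos (by linarith)) (Gamma_pos_of_pos (by linarith))

lemma rpow_two_mul_rpow_one_div {r a : ℝ} (hr : 0 ≤ r) (ha : a ≠ 0) :
    (r ^ (2 * a)) ^ (1 / a) = r ^ 2 := by
  rw [← rpow_mul hr, show 2 * a * (1 / a) = 2 by field_simp, rpow_two]

lemma boundStateEnergy_div_rpow {M a r c : ℝ} (hr : 0 < r) (ha : a ≠ 0) (ha₁ : |a| < 1)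
    (hc : 0 ≤ c) :
    boundStateEnergy M a (c / r ^ (2 * a))
      = -(2 / (M * r ^ 2)) * (c * Gamma (1 + a) / Gamma (1 - a)) ^ (1 / a) := by
  have hG := gamma_one_add_div_gamma_one_sub_pos ha₁
  have hcG : 0 ≤ c * Gamma (1 + a) / Gamma (1 - a) := by
    rw [mul_div_assoc]; positivity
  have hscale : c / r ^ (2 * a) * Gamma (1 + a) / Gamma (1 - a)
      = c * Gamma (1 + a) / Gamma (1 - a) / r ^ (2 * a) := by ring
  rw [boundStateEnergy, hscale, div_rpow hcG (rpow_nonneg hr.le _),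
    rpow_two_mul_rpow_one_div hr.le ha]
  ring

lemma boundStateEnergy_inj {M a s t : ℝ} (hM : M ≠ 0) (ha : a ≠ 0) (ha₁ : |a| < 1)
    (hs : 0 ≤ s) (ht : 0 ≤ t) :
    boundStateEnergy M a s = boundStateEnergy M a t ↔ s = t := by
  have hG := gamma_one_add_div_gamma_one_sub_pos ha₁
  simp only [boundStateEnergy, mul_div_assoc]
  rw [mul_right_inj' (by simpa using hM),
    rpow_left_inj (by positivity) (by positivity) (one_div_ne_zero ha),
    mul_left_inj' hG.ne']

theorem stmt_17 (j r₀ lam M ν : ℝ) (hj0 : 0 < |j|) (hj : |j| < 1)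
    (hr₀ : 0 < r₀) (hM : 0 < M) (hν : ν < 0)
    (hratio : (lam + |j|) / (lam - |j|) > 0) :
    (-(2 / M) * (-ν * Real.Gamma (1 + |j|) / Real.Gamma (1 - |j|)) ^ (1 / |j|)
      = -(2 / (M * r₀ ^ 2)) *
        (((lam + |j|) / (lam - |j|)) * Real.Gamma (1 + |j|) / Real.Gamma (1 - |j|)) ^ (1 / |j|))
    ↔ ν = -(1 / r₀ ^ (2 * |j|)) * ((lam + |j|) / (lam - |j|)) := by
  have hj₁ : |(|j|)| < 1 := by rwa [abs_abs]
  rw [← boundStateEnergy_div_rpow hr₀ hj0.ne' hj₁ hratio.le]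
  change boundStateEnergy M |j| (-ν) = _ ↔ _
  rw [boundStateEnergy_inj hM.ne' hj0.ne' hj₁ (by linarith) (by positivity)]
  constructor <;> intro h <;> linear_combination (-1 : ℝ) * h
end
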